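/- For d ≥ 1 and z ∈ ℝ, let B(z) be the d×d matrix whose first row has all entries equal to z, whose subdiagonal entries (i+1, i), i = 1,…,d−1, equal 1, and whose remaining entries are 0, and let ‖A‖₁ = max_{k=1,…,d} Σ_{j=1}^d |a_{jk}| denote the maximum absolute column sum norm. Then: (a) for every Δ ≥ 0, ‖B(Δ)‖₁ ≤ Δ + 1; and (b) for every δ with 0 ≤ δ ≤ 1, ‖B(δ)^d‖₁ ≤ C_d δ, where C_d = Σ_{l=0}^{d−1} Σ_{k=0}^{l} binom(l,k). -/

import Mathlib

open Finset

/-- The `d × d` matrix `B(z)`: all entries of the first row equal `z`, the subdiagonal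
entries `(i+1, i)` equal `1`, and all remaining entries are `0`. -/
def companionMat (d : ℕ) (z : ℝ) : Matrix (Fin d) (Fin d) ℝ :=
  fun i j => if (i : ℕ) = 0 then z else if (i : ℕ) = (j : ℕ) + 1 then 1 else 0

/-- The maximum absolute column sum norm `‖A‖₁ = max_k Σ_j |a_{jk}|`. -/
noncomputable def colSumNorm {d : ℕ} (A : Matrix (Fin d) (Fin d) ℝ) : ℝ :=
  ⨆ k : Fin d, ∑ j : Fin d, |A j k|

/-!
Transposition turns `colSumNorm` into Mathlib's `ℓ∞` operator norm, a submultiplicative norm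
with `‖1‖ = 1`. Write `B(z) = N + z • R`, where `N = B(0)` is the nilpotent lower shift
(`N ^ d = 0`, `‖N‖₁ ≤ 1`) and `R` is the first row of ones (`‖R‖₁ ≤ 1`). In any normed ring the
telescoping identity `(a + b)^(n+1) - a^(n+1) = ((a + b)^n - a^n)(a + b) + a^n b` gives
`‖(a + b)^n - a^n‖ ≤ (‖a‖ + ‖b‖)^n - ‖a‖^n`, hence
`‖B(δ)^d‖₁ = ‖B(δ)^d - N^d‖₁ ≤ (1 + δ)^d - 1 = δ ∑_{l<d} (1 + δ)^l ≤ δ ∑_{l<d} 2^l`,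
and `∑_{k≤l} binom(l,k) = 2^l`.
-/

open scoped Matrix

attribute [local instance] Matrix.linftyOpNormedRing Matrix.linftyOpNormedAlgebra

section NormedRing

variable {R : Type*} [SeminormedRing R] [NormOneClass R]

theorem norm_add_pow_sub_pow_le {a b : R} {s t : ℝ} (ha : ‖a‖ ≤ s) (hb : ‖b‖ ≤ t) (n : ℕ) :
    ‖(a + b) ^ n - a ^ n‖ ≤ (s + t) ^ n - s ^ n := by
  induction n with
  | zero => simp
  | succ n ih =>
    have hs : 0 ≤ s := (norm_nonneg a).trans ha
    have hab : ‖a + b‖ ≤ s + t := norm_add_le_of_le ha hb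
    have han : ‖a ^ n‖ ≤ s ^ n := (norm_pow_le a n).trans (pow_le_pow_left₀ (norm_nonneg a) ha n)
    have hgap : 0 ≤ (s + t) ^ n - s ^ n := (norm_nonneg _).trans ih
    calc ‖(a + b) ^ (n + 1) - a ^ (n + 1)‖
        = ‖((a + b) ^ n - a ^ n) * (a + b) + a ^ n * b‖ := by rw [pow_succ, pow_succ]; noncomm_ring
      _ ≤ ‖(a + b) ^ n - a ^ n‖ * ‖a + b‖ + ‖a ^ n‖ * ‖b‖ :=
          norm_add_le_of_le (norm_mul_le _ _) (norm_mul_le _ _)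
      _ ≤ ((s + t) ^ n - s ^ n) * (s + t) + s ^ n * t := by gcongr
      _ = (s + t) ^ (n + 1) - s ^ (n + 1) := by ring

end NormedRing

theorem one_add_pow_sub_one_le {δ : ℝ} (h₀ : 0 ≤ δ) (h₁ : δ ≤ 1) (n : ℕ) :
    (1 + δ) ^ n - 1 ≤ (∑ l ∈ range n, (2 : ℝ) ^ l) * δ := by
  rw [← geom_sum_mul, add_sub_cancel_left]
  gcongr
  linarith

theorem Fin.sum_univ_ite_val_eq {M : Type*} [AddCommMonoid M] (d t : ℕ) (f : ℕ → M) :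
    ∑ j : Fin d, (if (j : ℕ) = t then f j else 0) = if t < d then f t else 0 := by
  rw [Fin.sum_univ_eq_sum_range (fun j => if j = t then f j else 0), sum_ite_eq']
  simp only [mem_range]

theorem colSumNorm_eq_norm_transpose {d : ℕ} (A : Matrix (Fin d) (Fin d) ℝ) :
    colSumNorm A = ‖Aᵀ‖ := by
  rw [Matrix.linfty_opNorm_def, Finset.sup_univ_eq_ciSup, NNReal.coe_iSup, colSumNorm]
  simp [Real.norm_eq_abs]

theorem companionMat_zero_apply {d : ℕ} (i j : Fin d) :
    companionMat d 0 i j = if (i : ℕ) = j + 1 then 1 else 0 := by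
  unfold companionMat
  split_ifs <;> first | rfl | omega

theorem companionMat_zero_pow_apply {d : ℕ} (n : ℕ) (i j : Fin d) :
    (companionMat d 0 ^ n) i j = if (i : ℕ) = j + n then 1 else 0 := by
  induction n generalizing i with
  | zero => simp [Matrix.one_apply, Fin.ext_iff]
  | succ n ih =>
    simp only [pow_succ', Matrix.mul_apply, companionMat_zero_apply, ih, mul_ite, mul_one, mul_zero]
    rw [Fin.sum_univ_ite_val_eq _ _ fun x => if (i : ℕ) = x + 1 then 1 else 0]
    have := i.isLt
    split_ifs <;> first | rfl | omega

theorem companionMat_zero_pow_self (d : ℕ) : companionMat d 0 ^ d = 0 := by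
  ext i j
  rw [companionMat_zero_pow_apply, if_neg (by omega), Matrix.zero_apply]

def firstRowOnes (d : ℕ) : Matrix (Fin d) (Fin d) ℝ :=
  Matrix.of fun i _ => if (i : ℕ) = 0 then 1 else 0

theorem companionMat_eq_add_smul (d : ℕ) (z : ℝ) :
    companionMat d z = companionMat d 0 + z • firstRowOnes d := by
  ext i j
  by_cases hi : (i : ℕ) = 0 <;> simp [companionMat, firstRowOnes, hi]

theorem colSumNorm_companionMat_zero_le (d : ℕ) : colSumNorm (companionMat d 0) ≤ 1 := by
  refine Real.iSup_le (fun k => ?_) zero_le_one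
  simp only [companionMat_zero_apply, apply_ite abs, abs_one, abs_zero]
  rw [Fin.sum_univ_ite_val_eq _ _ fun _ => 1]
  split_ifs <;> norm_num

theorem colSumNorm_firstRowOnes_le (d : ℕ) : colSumNorm (firstRowOnes d) ≤ 1 := by
  refine Real.iSup_le (fun k => ?_) zero_le_one
  simp only [firstRowOnes, Matrix.of_apply, apply_ite abs, abs_one, abs_zero]
  rw [Fin.sum_univ_ite_val_eq _ _ fun _ => 1]
  split_ifs <;> norm_num

/-- (a) `‖B(Δ)‖₁ ≤ Δ + 1` for `Δ ≥ 0`; (b) `‖B(δ)^d‖₁ ≤ C_d δ` for `0 ≤ δ ≤ 1`,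
where `C_d = Σ_{l=0}^{d−1} Σ_{k=0}^{l} binom(l,k)`. -/
theorem companion_colSumNorm_bounds (d : ℕ) (hd : 1 ≤ d) :
    (∀ Δ : ℝ, 0 ≤ Δ → colSumNorm (companionMat d Δ) ≤ Δ + 1) ∧
    (∀ δ : ℝ, 0 ≤ δ → δ ≤ 1 →
      colSumNorm (companionMat d δ ^ d)
        ≤ (∑ l ∈ range d, ∑ k ∈ range (l + 1), (l.choose k : ℝ)) * δ) := by
  have : Nonempty (Fin d) := ⟨⟨0, hd⟩⟩
  have hN : ‖(companionMat d 0)ᵀ‖ ≤ 1 := by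
    rw [← colSumNorm_eq_norm_transpose]; exact colSumNorm_companionMat_zero_le d
  have hE : ∀ z : ℝ, 0 ≤ z → ‖z • (firstRowOnes d)ᵀ‖ ≤ z := fun z hz => by
    rw [norm_smul, Real.norm_of_nonneg hz, ← colSumNorm_eq_norm_transpose]
    exact mul_le_of_le_one_right hz (colSumNorm_firstRowOnes_le d)
  have htr : ∀ z, (companionMat d z)ᵀ = (companionMat d 0)ᵀ + z • (firstRowOnes d)ᵀ := fun z => by
    rw [companionMat_eq_add_smul, Matrix.transpose_add, Matrix.transpose_smul]
  refine ⟨fun Δ hΔ => ?_, fun δ h₀ h₁ => ?_⟩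
  · rw [colSumNorm_eq_norm_transpose, htr, add_comm Δ]
    exact norm_add_le_of_le hN (hE Δ hΔ)
  · have hpow := norm_add_pow_sub_pow_le hN (hE δ h₀) d
    rw [← htr, ← Matrix.transpose_pow, ← Matrix.transpose_pow, companionMat_zero_pow_self,
      Matrix.transpose_zero, sub_zero, one_pow, ← colSumNorm_eq_norm_transpose] at hpow
    have hC : ∀ l : ℕ, ∑ k ∈ range (l + 1), (l.choose k : ℝ) = 2 ^ l := fun l => by
      exact_mod_cast Nat.sum_range_choose l
    simp_rw [hC]
    exact hpow.trans (one_add_pow_sub_one_le h₀ h₁ d)
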